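/- Let g be a 6-dimensional nilpotent Lie algebra with a complex structure admitting a (1,0)-basis ω¹,ω²,ω³ with dω¹ = dω² = 0 and dω³ = ρω¹∧ω² + ω¹∧conj(ω¹) + λω¹∧conj(ω²) + Dω²∧conj(ω²), ρ ∈ {0,1}, λ ≥ 0, D = x+iy, and suppose λ ≠ ρ. Then g is 2-step nilpotent with b₁(g) ≥ 4, and: 4y² > (ρ−λ²)(4x+ρ−λ²) implies g ≅ h₂; 4y² = (ρ−λ²)(4x+ρ−λ²) implies g ≅ h₄; 4y² < (ρ−λ²)(4x+ρ−λ²) implies g ≅ h₅. -/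

import Mathlib

/-- `g ≅ h₂ = (0,0,0,0,12,34)`. -/
def IsH2 (g : Type) [LieRing g] [LieAlgebra ℝ g] : Prop :=
  ∃ b : Module.Basis (Fin 6) ℝ g, ⁅b 0, b 1⁆ = -b 4 ∧ ⁅b 2, b 3⁆ = -b 5 ∧
    ⁅b 0, b 2⁆ = 0 ∧ ⁅b 0, b 3⁆ = 0 ∧ ⁅b 0, b 4⁆ = 0 ∧ ⁅b 0, b 5⁆ = 0 ∧
    ⁅b 1, b 2⁆ = 0 ∧ ⁅b 1, b 3⁆ = 0 ∧ ⁅b 1, b 4⁆ = 0 ∧ ⁅b 1, b 5⁆ = 0 ∧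
    ⁅b 2, b 4⁆ = 0 ∧ ⁅b 2, b 5⁆ = 0 ∧ ⁅b 3, b 4⁆ = 0 ∧ ⁅b 3, b 5⁆ = 0 ∧
    ⁅b 4, b 5⁆ = 0

/-- `g ≅ h₄ = (0,0,0,0,12,14+23)`. -/
def IsH4 (g : Type) [LieRing g] [LieAlgebra ℝ g] : Prop :=
  ∃ b : Module.Basis (Fin 6) ℝ g, ⁅b 0, b 1⁆ = -b 4 ∧ ⁅b 0, b 3⁆ = -b 5 ∧
    ⁅b 1, b 2⁆ = -b 5 ∧
    ⁅b 0, b 2⁆ = 0 ∧ ⁅b 0, b 4⁆ = 0 ∧ ⁅b 0, b 5⁆ = 0 ∧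
    ⁅b 1, b 3⁆ = 0 ∧ ⁅b 1, b 4⁆ = 0 ∧ ⁅b 1, b 5⁆ = 0 ∧
    ⁅b 2, b 3⁆ = 0 ∧ ⁅b 2, b 4⁆ = 0 ∧ ⁅b 2, b 5⁆ = 0 ∧
    ⁅b 3, b 4⁆ = 0 ∧ ⁅b 3, b 5⁆ = 0 ∧ ⁅b 4, b 5⁆ = 0

/-- `g ≅ h₅ = (0,0,0,0,13+42,14+23)`. -/
def IsH5 (g : Type) [LieRing g] [LieAlgebra ℝ g] : Prop :=
  ∃ b : Module.Basis (Fin 6) ℝ g, ⁅b 0, b 2⁆ = -b 4 ∧ ⁅b 1, b 3⁆ = b 4 ∧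
    ⁅b 0, b 3⁆ = -b 5 ∧ ⁅b 1, b 2⁆ = -b 5 ∧
    ⁅b 0, b 1⁆ = 0 ∧ ⁅b 0, b 4⁆ = 0 ∧ ⁅b 0, b 5⁆ = 0 ∧
    ⁅b 1, b 4⁆ = 0 ∧ ⁅b 1, b 5⁆ = 0 ∧
    ⁅b 2, b 3⁆ = 0 ∧ ⁅b 2, b 4⁆ = 0 ∧ ⁅b 2, b 5⁆ = 0 ∧
    ⁅b 3, b 4⁆ = 0 ∧ ⁅b 3, b 5⁆ = 0 ∧ ⁅b 4, b 5⁆ = 0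

/-!
The forms `ω¹, ω²` vanish on brackets, so `[g, g]` lies in the plane `ω¹ = ω² = 0`, which is
central by the formula for `dω³`: `g` is 2-step nilpotent with `b₁ ≥ 4`. On the real basis where
`(ω¹, ω², ω³)` takes the values `(1,0,0), (i,0,0), (0,1/(ρ+λ),0), (0,i/(λ-ρ),0), (0,0,1), (0,0,i)`
the structure constants are `adaptedLie₄ a`, `adaptedLie₅ b` with `a = -2y/(λ²-ρ²)` and
`b = 2x/(λ²-ρ²)`. The Pfaffian of the pencil `s • adaptedLie₄ a + t • adaptedLie₅ b` (on the
first four basis vectors) is `-s² + 2ast + (2b-1)t²`, whose discriminant `4(a² + 2b - 1)` has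
the sign of `4y² - (ρ-λ²)(4x+ρ-λ²)`. Two distinct real roots, a double root or no real root
give `h₂`, `h₄`, `h₅`, and in each case an explicit change of basis exhibits the isomorphism.
-/

open Module Matrix

theorem Module.Basis.exists_apply_eq_sum_of_isUnit_det {R M ι : Type*} [CommRing R]
    [AddCommGroup M] [Module R M] [Fintype ι] [DecidableEq ι] (E : Basis ι R M)
    {P : Matrix ι ι R} (hP : IsUnit P.det) : ∃ b : Basis ι R M, ∀ i, b i = ∑ j, P i j • E j :=
  ⟨E.map (Matrix.toLinearEquiv E Pᵀ (by rwa [det_transpose])), fun i => by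
    simp [Matrix.toLinearEquiv, Matrix.toLin_self]⟩

noncomputable def complexCubeBasis : Basis (Fin 6) ℝ (ℂ × ℂ × ℂ) :=
  (Complex.basisOneI.prod (Complex.basisOneI.prod Complex.basisOneI)).reindex
    ((Equiv.sumCongr (Equiv.refl _) finSumFinEquiv).trans finSumFinEquiv)

theorem complexCubeBasis_apply (i : Fin 6) : complexCubeBasis i =
    ![(1, 0, 0), (Complex.I, 0, 0), (0, 1, 0), (0, Complex.I, 0), (0, 0, 1),
      (0, 0, Complex.I)] i := by
  fin_cases i <;>
    simp [complexCubeBasis, Basis.prod_apply, finSumFinEquiv, Fin.addCases, Fin.subNat,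
      Prod.mk_zero_zero]

def adaptedLie₄ (a : ℝ) : Matrix (Fin 6) (Fin 6) ℝ :=
  !![0, 0, -1, 0, 0, 0; 0, 0, 0, -1, 0, 0; 1, 0, 0, a, 0, 0; 0, 1, -a, 0, 0, 0;
    0, 0, 0, 0, 0, 0; 0, 0, 0, 0, 0, 0]

def adaptedLie₅ (b : ℝ) : Matrix (Fin 6) (Fin 6) ℝ :=
  !![0, 2, 0, 1, 0, 0; -2, 0, -1, 0, 0, 0; 0, 1, 0, b, 0, 0; -1, 0, -b, 0, 0, 0;
    0, 0, 0, 0, 0, 0; 0, 0, 0, 0, 0, 0]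

/-- In Salamon's notation, `g = (0, 0, 0, 0, 13 + 24 - a·34, -2·12 - 14 + 23 - b·34)` on `E`. -/
def IsAdaptedBasis {g : Type*} [LieRing g] [LieAlgebra ℝ g] (E : Basis (Fin 6) ℝ g)
    (a b : ℝ) : Prop :=
  ∀ i j, ⁅E i, E j⁆ = adaptedLie₄ a i j • E 4 + adaptedLie₅ b i j • E 5

theorem exists_isAdaptedBasis {g : Type*} [LieRing g] [LieAlgebra ℝ g] (ω₁ ω₂ ω₃ : g →ₗ[ℝ] ℂ)
    (hcoord : Function.Bijective (fun X : g => (ω₁ X, ω₂ X, ω₃ X)))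
    {ρ lam : ℝ} {D : ℂ} (hμ : ρ + lam ≠ 0) (hν : lam - ρ ≠ 0)
    (hd1 : ∀ X Y : g, ω₁ ⁅X, Y⁆ = 0)
    (hd2 : ∀ X Y : g, ω₂ ⁅X, Y⁆ = 0)
    (hd3 : ∀ X Y : g, -ω₃ ⁅X, Y⁆ =
      (ρ : ℂ) * (ω₁ X * ω₂ Y - ω₁ Y * ω₂ X)
        + (ω₁ X * (starRingEnd ℂ) (ω₁ Y) - ω₁ Y * (starRingEnd ℂ) (ω₁ X))
        + (lam : ℂ) * (ω₁ X * (starRingEnd ℂ) (ω₂ Y) - ω₁ Y * (starRingEnd ℂ) (ω₂ X))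
        + D * (ω₂ X * (starRingEnd ℂ) (ω₂ Y) - ω₂ Y * (starRingEnd ℂ) (ω₂ X))) :
    ∃ E : Basis (Fin 6) ℝ g, IsAdaptedBasis E (-2 * D.im / ((ρ + lam) * (lam - ρ)))
      (2 * D.re / ((ρ + lam) * (lam - ρ))) := by
  let F : g ≃ₗ[ℝ] ℂ × ℂ × ℂ := LinearEquiv.ofBijective (ω₁.prod (ω₂.prod ω₃)) hcoord
  let w : Fin 6 → ℝ := ![1, 1, (ρ + lam)⁻¹, (lam - ρ)⁻¹, 1, 1]
  have hw : ∀ i, IsUnit (w i) := by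
    intro i
    fin_cases i <;> simp [w, hμ, hν]
  let E := (complexCubeBasis.isUnitSMul hw).map F.symm
  have hE : ∀ i, F (E i) = w i • complexCubeBasis i := fun i => by
    simp [E, Basis.isUnitSMul_apply]
  have hF_lie : ∀ X Y : g, F ⁅X, Y⁆ = (0, 0, ω₃ ⁅X, Y⁆) := fun X Y =>
    show (ω₁ _, ω₂ _, ω₃ _) = _ by rw [hd1, hd2]
  have hω₁ : ∀ i, ω₁ (E i) = (w i • complexCubeBasis i).1 := fun i => congrArg (·.1) (hE i)
  have hω₂ : ∀ i, ω₂ (E i) = (w i • complexCubeBasis i).2.1 := fun i => congrArg (·.2.1) (hE i)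
  refine ⟨E, fun i j => F.injective ?_⟩
  rw [hF_lie, map_add, map_smul, map_smul, hE, hE, ← neg_neg (ω₃ _), hd3, hω₁, hω₁, hω₂, hω₂]
  -- keep the real scalars as atoms so that conjugation fixes them
  fin_cases i <;> fin_cases j <;>
    simp [complexCubeBasis_apply, w, adaptedLie₄, adaptedLie₅, Complex.ext_iff,
      -Complex.ofReal_inv, -Complex.ofReal_div, -Complex.ofReal_mul, -Complex.ofReal_neg,
      -Complex.ofReal_add, -Complex.ofReal_sub] <;>
    field_simp <;> (try and_intros) <;> ring

namespace IsAdaptedBasis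

variable {g : Type} [LieRing g] [LieAlgebra ℝ g] {E : Basis (Fin 6) ℝ g} {a b : ℝ}

theorem lie_mem_span (hE : IsAdaptedBasis E a b) (X Y : g) :
    ⁅X, Y⁆ ∈ Submodule.span ℝ {E 4, E 5} := by
  have hbasis : ∀ i j, ⁅E i, E j⁆ ∈ Submodule.span ℝ {E 4, E 5} := fun i j => by
    rw [hE i j]
    exact Submodule.add_mem _ (Submodule.smul_mem _ _ (Submodule.subset_span (by simp)))
      (Submodule.smul_mem _ _ (Submodule.subset_span (by simp)))
  rw [← E.sum_repr X, ← E.sum_repr Y]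
  simp only [sum_lie, lie_sum, smul_lie, lie_smul]
  exact Submodule.sum_mem _ fun j _ => Submodule.smul_mem _ _ <|
    Submodule.sum_mem _ fun i _ => Submodule.smul_mem _ _ (hbasis i j)

theorem lie_eq_zero_of_mem_span (hE : IsAdaptedBasis E a b) (X : g) {m : g}
    (hm : m ∈ Submodule.span ℝ {E 4, E 5}) : ⁅X, m⁆ = 0 := by
  have hcentral : ∀ i, ⁅E i, E 4⁆ = 0 ∧ ⁅E i, E 5⁆ = 0 := fun i => by
    fin_cases i <;> simp [hE _ 4, hE _ 5, adaptedLie₄, adaptedLie₅]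
  obtain ⟨c, d, rfl⟩ := Submodule.mem_span_pair.mp hm
  rw [← E.sum_repr X]
  simp only [sum_lie, lie_add, lie_smul, smul_lie, hcentral, smul_zero, add_zero,
    Finset.sum_const_zero]

theorem lowerCentralSeries_one_le (hE : IsAdaptedBasis E a b) :
    (LieModule.lowerCentralSeries ℝ g g 1).toSubmodule ≤ Submodule.span ℝ {E 4, E 5} := by
  rw [LieModule.lowerCentralSeries_succ, LieModule.lowerCentralSeries_zero,
    LieSubmodule.lieIdeal_oper_eq_linear_span']
  exact Submodule.span_le.mpr (by rintro _ ⟨X, -, Y, -, rfl⟩; exact hE.lie_mem_span X Y)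

theorem lowerCentralSeries_two_eq_bot (hE : IsAdaptedBasis E a b) :
    LieModule.lowerCentralSeries ℝ g g 2 = ⊥ := by
  rw [LieModule.lowerCentralSeries_succ, LieSubmodule.lie_eq_bot_iff]
  exact fun X _ m hm => hE.lie_eq_zero_of_mem_span X (hE.lowerCentralSeries_one_le hm)

theorem lowerCentralSeries_one_ne_bot (hE : IsAdaptedBasis E a b) :
    LieModule.lowerCentralSeries ℝ g g 1 ≠ ⊥ := by
  intro h
  have hmem : ⁅E 0, E 1⁆ ∈ LieModule.lowerCentralSeries ℝ g g 1 := by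
    rw [LieModule.lowerCentralSeries_succ, LieModule.lowerCentralSeries_zero]
    exact LieSubmodule.lie_mem_lie (LieSubmodule.mem_top _) (LieSubmodule.mem_top _)
  rw [h, LieSubmodule.mem_bot, hE] at hmem
  simp [adaptedLie₄, adaptedLie₅, E.ne_zero 5] at hmem

theorem four_le_finrank_sub_finrank_lowerCentralSeries_one (hE : IsAdaptedBasis E a b) :
    4 ≤ finrank ℝ g - finrank ℝ (LieModule.lowerCentralSeries ℝ g g 1) := by
  have : Module.Finite ℝ g := Module.Finite.of_basis E
  have h6 : finrank ℝ g = 6 := by rw [finrank_eq_card_basis E, Fintype.card_fin]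
  have h2 : finrank ℝ (LieModule.lowerCentralSeries ℝ g g 1) ≤ 2 := by
    classical
    calc _ ≤ finrank ℝ (Submodule.span ℝ {E 4, E 5}) :=
          Submodule.finrank_mono hE.lowerCentralSeries_one_le
      _ ≤ 2 := by
          have := finrank_span_finset_le_card (R := ℝ) ({E 4, E 5} : Finset g)
          rw [Set.finrank, Finset.coe_insert, Finset.coe_singleton] at this
          exact this.trans Finset.card_le_two
  omega

theorem isH4 (hE : IsAdaptedBasis E a ((1 - a ^ 2) / 2)) : IsH4 g := by
  obtain ⟨b, hb⟩ := E.exists_apply_eq_sum_of_isUnit_det (P := !![-1, 0, 0, 0, 0, 0;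
      0, 1, 0, 0, 0, 0; -a, -1, 0, 2, 0, 0; 1, -a, -2, 0, 0, 0; 0, 0, 0, 0, 0, 2;
      0, 0, 0, 0, 2, -2 * a])
    (by simp [det_succ_row_zero, Fin.sum_univ_succ, Fin.succAbove])
  unfold IsAdaptedBasis at hE
  refine ⟨b, ?_⟩
  and_intros <;>
    simp [hb, Fin.sum_univ_six, hE, adaptedLie₄, adaptedLie₅] <;>
    module

theorem isH2 {s : ℝ} (hs : s ≠ 0) (hE : IsAdaptedBasis E a ((1 - a ^ 2 + s ^ 2) / 2)) :
    IsH2 g := by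
  set P : Matrix (Fin 6) (Fin 6) ℝ := !![a - s, 1, 0, -2, 0, 0; 1, -(a - s), -2, 0, 0, 0;
    -(a + s), -1, 0, 2, 0, 0; -1, a + s, 2, 0, 0, 0; 0, 0, 0, 0, 4 * s, -(4 * s * (a - s));
    0, 0, 0, 0, -(4 * s), 4 * s * (a + s)]
  have hdet : P.det = 512 * s ^ 5 := by
    simp [P, det_succ_row_zero, Fin.sum_univ_succ, Fin.succAbove]
    ring
  obtain ⟨b, hb⟩ := E.exists_apply_eq_sum_of_isUnit_det (P := P)
    (isUnit_iff_ne_zero.mpr (by rw [hdet]; positivity))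
  unfold IsAdaptedBasis at hE
  refine ⟨b, ?_⟩
  and_intros <;>
    simp [hb, P, Fin.sum_univ_six, hE, adaptedLie₄, adaptedLie₅] <;>
    module

theorem isH5 {s : ℝ} (hs : s ≠ 0) (hE : IsAdaptedBasis E a ((1 - a ^ 2 - s ^ 2) / 2)) :
    IsH5 g := by
  set P : Matrix (Fin 6) (Fin 6) ℝ := !![-s, 0, 0, 0, 0, 0; a, 1, 0, -2, 0, 0;
    0, 2 * s, 0, 0, 0, 0; 2, -2 * a, -4, 0, 0, 0; 0, 0, 0, 0, 0, 4 * s ^ 2;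
    0, 0, 0, 0, 4 * s, -(4 * a * s)]
  have hdet : P.det = 256 * s ^ 5 := by
    simp [P, det_succ_row_zero, Fin.sum_univ_succ, Fin.succAbove]
    ring
  obtain ⟨b, hb⟩ := E.exists_apply_eq_sum_of_isUnit_det (P := P)
    (isUnit_iff_ne_zero.mpr (by rw [hdet]; positivity))
  unfold IsAdaptedBasis at hE
  refine ⟨b, ?_⟩
  and_intros <;>
    simp [hb, P, Fin.sum_univ_six, hE, adaptedLie₄, adaptedLie₅] <;>
    module

theorem isH2_of_one_lt (hE : IsAdaptedBasis E a b) (h : 1 < a ^ 2 + 2 * b) : IsH2 g := by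
  have hs : √(a ^ 2 + 2 * b - 1) ^ 2 = a ^ 2 + 2 * b - 1 := Real.sq_sqrt (by linarith)
  refine isH2 (E := E) (a := a) (s := √(a ^ 2 + 2 * b - 1))
    (Real.sqrt_pos.mpr (by linarith)).ne' ?_
  convert hE using 2
  rw [hs]
  ring

theorem isH4_of_eq_one (hE : IsAdaptedBasis E a b) (h : a ^ 2 + 2 * b = 1) : IsH4 g :=
  isH4 (by convert hE using 2; linarith)

theorem isH5_of_lt_one (hE : IsAdaptedBasis E a b) (h : a ^ 2 + 2 * b < 1) : IsH5 g := by
  have hs : √(1 - a ^ 2 - 2 * b) ^ 2 = 1 - a ^ 2 - 2 * b := Real.sq_sqrt (by linarith)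
  refine isH5 (E := E) (a := a) (s := √(1 - a ^ 2 - 2 * b))
    (Real.sqrt_pos.mpr (by linarith)).ne' ?_
  convert hE using 2
  rw [hs]
  ring

end IsAdaptedBasis

theorem stmt19_general (g : Type) [LieRing g] [LieAlgebra ℝ g]
    (ω₁ ω₂ ω₃ : g →ₗ[ℝ] ℂ)
    (hcoord : Function.Bijective (fun X : g => (ω₁ X, ω₂ X, ω₃ X)))
    (ρ lam : ℝ) (hρ : ρ = 0 ∨ ρ = 1) (hlam : 0 ≤ lam)
    (D : ℂ) (x y : ℝ) (hx : D.re = x) (hy : D.im = y)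
    (hlamρ : lam ≠ ρ)
    (hd1 : ∀ X Y : g, ω₁ ⁅X, Y⁆ = 0)
    (hd2 : ∀ X Y : g, ω₂ ⁅X, Y⁆ = 0)
    (hd3 : ∀ X Y : g, -ω₃ ⁅X, Y⁆ =
      (ρ : ℂ) * (ω₁ X * ω₂ Y - ω₁ Y * ω₂ X)
        + (ω₁ X * (starRingEnd ℂ) (ω₁ Y) - ω₁ Y * (starRingEnd ℂ) (ω₁ X))
        + (lam : ℂ) * (ω₁ X * (starRingEnd ℂ) (ω₂ Y) - ω₁ Y * (starRingEnd ℂ) (ω₂ X))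
        + D * (ω₂ X * (starRingEnd ℂ) (ω₂ Y) - ω₂ Y * (starRingEnd ℂ) (ω₂ X))) :
    (LieModule.lowerCentralSeries ℝ g g 2 = ⊥ ∧
      LieModule.lowerCentralSeries ℝ g g 1 ≠ ⊥) ∧
    (Module.finrank ℝ g -
        Module.finrank ℝ ↥(LieModule.lowerCentralSeries ℝ g g 1) ≥ 4) ∧
    (4 * y ^ 2 > (ρ - lam ^ 2) * (4 * x + ρ - lam ^ 2) → IsH2 g) ∧
    (4 * y ^ 2 = (ρ - lam ^ 2) * (4 * x + ρ - lam ^ 2) → IsH4 g) ∧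
    (4 * y ^ 2 < (ρ - lam ^ 2) * (4 * x + ρ - lam ^ 2) → IsH5 g) := by
  have hμ : ρ + lam ≠ 0 := by
    rcases hρ with rfl | rfl
    · simpa using hlamρ
    · linarith
  have hν : lam - ρ ≠ 0 := sub_ne_zero.mpr hlamρ
  obtain ⟨E, hE⟩ := exists_isAdaptedBasis ω₁ ω₂ ω₃ hcoord hμ hν hd1 hd2 hd3
  subst hx hy
  set κ := (ρ + lam) * (lam - ρ) with hκ
  have hκ₀ : κ ≠ 0 := mul_ne_zero hμ hν
  have hκ₂ : 0 < κ ^ 2 := by positivity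
  have hdisc : (-2 * D.im / κ) ^ 2 + 2 * (2 * D.re / κ) - 1 =
      (4 * D.im ^ 2 - (ρ - lam ^ 2) * (4 * D.re + ρ - lam ^ 2)) / κ ^ 2 := by
    rw [hκ]
    rcases hρ with rfl | rfl <;> field_simp <;> ring
  refine ⟨⟨hE.lowerCentralSeries_two_eq_bot, hE.lowerCentralSeries_one_ne_bot⟩,
    hE.four_le_finrank_sub_finrank_lowerCentralSeries_one, fun h => hE.isH2_of_one_lt ?_,
    fun h => hE.isH4_of_eq_one ?_, fun h => hE.isH5_of_lt_one ?_⟩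
  · linarith [div_pos (sub_pos.mpr h) hκ₂]
  · rw [h, sub_self, zero_div] at hdisc
    linarith
  · linarith [div_neg_of_neg_of_pos (sub_neg.mpr h) hκ₂]

/-- Proposition 2.4(ii): classification of the Lie algebra underlying the
complex structure equations `dω¹ = dω² = 0`,
`dω³ = ρ ω¹∧ω² + ω¹∧ω̄¹ + λ ω¹∧ω̄² + D ω²∧ω̄²` in the case `λ ≠ ρ`; the
algebra is 2-step nilpotent with first Betti number `≥ 4`. -/
theorem stmt19 (g : Type) [LieRing g] [LieAlgebra ℝ g]
    (J : g →ₗ[ℝ] g) (hJ : ∀ X, J (J X) = -X)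
    (ω₁ ω₂ ω₃ : g →ₗ[ℝ] ℂ)
    (h1 : ∀ X, ω₁ (J X) = Complex.I * ω₁ X)
    (h2 : ∀ X, ω₂ (J X) = Complex.I * ω₂ X)
    (h3 : ∀ X, ω₃ (J X) = Complex.I * ω₃ X)
    (hcoord : Function.Bijective (fun X : g => (ω₁ X, ω₂ X, ω₃ X)))
    (ρ lam : ℝ) (hρ : ρ = 0 ∨ ρ = 1) (hlam : 0 ≤ lam)
    (D : ℂ) (x y : ℝ) (hx : D.re = x) (hy : D.im = y)
    (hlamρ : lam ≠ ρ)
    (hd1 : ∀ X Y : g, ω₁ ⁅X, Y⁆ = 0)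
    (hd2 : ∀ X Y : g, ω₂ ⁅X, Y⁆ = 0)
    (hd3 : ∀ X Y : g, -ω₃ ⁅X, Y⁆ =
      (ρ : ℂ) * (ω₁ X * ω₂ Y - ω₁ Y * ω₂ X)
        + (ω₁ X * (starRingEnd ℂ) (ω₁ Y) - ω₁ Y * (starRingEnd ℂ) (ω₁ X))
        + (lam : ℂ) * (ω₁ X * (starRingEnd ℂ) (ω₂ Y) - ω₁ Y * (starRingEnd ℂ) (ω₂ X))
        + D * (ω₂ X * (starRingEnd ℂ) (ω₂ Y) - ω₂ Y * (starRingEnd ℂ) (ω₂ X))) :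
    (LieModule.lowerCentralSeries ℝ g g 2 = ⊥ ∧
      LieModule.lowerCentralSeries ℝ g g 1 ≠ ⊥) ∧
    (Module.finrank ℝ g -
        Module.finrank ℝ ↥(LieModule.lowerCentralSeries ℝ g g 1) ≥ 4) ∧
    (4 * y ^ 2 > (ρ - lam ^ 2) * (4 * x + ρ - lam ^ 2) → IsH2 g) ∧
    (4 * y ^ 2 = (ρ - lam ^ 2) * (4 * x + ρ - lam ^ 2) → IsH4 g) ∧
    (4 * y ^ 2 < (ρ - lam ^ 2) * (4 * x + ρ - lam ^ 2) → IsH5 g) :=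
  stmt19_general g ω₁ ω₂ ω₃ hcoord ρ lam hρ hlam D x y hx hy hlamρ hd1 hd2 hd3
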